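/- Let Ṽ_1 be the normalised Wolbachia operator with η = 1. For every initial point s = (x₁⁽⁰⁾,x₂⁽⁰⁾,x₃⁽⁰⁾,u⁽⁰⁾) ∈ S^{3,1} with x₂⁽⁰⁾ > 0, the sequence Ṽ_1^k(s) converges as k → ∞, with limit (0, 1/2, 0, 1/2) if x₁⁽⁰⁾ = x₃⁽⁰⁾ = 0, and limit (1, 0, 0, 0) otherwise. -/

import Mathlib

/-!
For `η = 1` the operator is the linear map `(x₁, x₂, x₃) ↦ (2x₁ + x₃, x₂, x₃)` followed by the
normalisation `(a, b, c) ↦ (a, b, c, b) / (a + 2b + c)`, which is invariant under scaling.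
Rescaling by `r = 2^{-(k+1)}`, the iterate `Ṽ_1^{k+1}(s)` is the normalisation of
`(x₁ + (1 - r) x₃, r x₂, r x₃)`. If `x₁ = x₃ = 0` this is constantly `(0, 1/2, 0, 1/2)`;
otherwise, as `r → 0`, it tends to the normalisation of `(x₁ + x₃, 0, 0)`, which is `(1, 0, 0, 0)`.
-/

/-- The normalised Wolbachia gonosomal operator with parameter `η`
(defined for points whose first three coordinates have positive sum). -/
noncomputable def nWolbOp (η : ℝ) (p : ℝ × ℝ × ℝ × ℝ) : ℝ × ℝ × ℝ × ℝ :=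
  (η * (2 * p.1 + p.2.2.1) / (2 * (p.1 + p.2.1 + p.2.2.1)),
   (p.2.1 + (1 - η) * p.2.2.1) / (2 * (p.1 + p.2.1 + p.2.2.1)),
   η * p.2.2.1 / (2 * (p.1 + p.2.1 + p.2.2.1)),
   ((1 - η) * (2 * p.1 + p.2.2.1) + p.2.1) / (2 * (p.1 + p.2.1 + p.2.2.1)))

/-- The set `S^{3,1}` of frequency distributions. -/
def S31 : Set (ℝ × ℝ × ℝ × ℝ) :=
  {p | 0 ≤ p.1 ∧ 0 ≤ p.2.1 ∧ 0 ≤ p.2.2.1 ∧ 0 ≤ p.2.2.2 ∧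
       0 < p.1 + p.2.1 + p.2.2.1 ∧ 0 < p.2.2.2 ∧
       p.1 + p.2.1 + p.2.2.1 + p.2.2.2 = 1}

open Filter Topology

noncomputable def wolbNormalize (a b c : ℝ) : ℝ × ℝ × ℝ × ℝ :=
  (a / (a + 2 * b + c), b / (a + 2 * b + c), c / (a + 2 * b + c), b / (a + 2 * b + c))

lemma wolbNormalize_mul (t a b c : ℝ) (ht : t ≠ 0) :
    wolbNormalize (t * a) (t * b) (t * c) = wolbNormalize a b c := by
  have hD : t * a + 2 * (t * b) + t * c = t * (a + 2 * b + c) := by ring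
  simp only [wolbNormalize, hD, mul_div_mul_left _ _ ht]

lemma wolbNormalize_zero_left_right {b : ℝ} (hb : b ≠ 0) :
    wolbNormalize 0 b 0 = (0, 1 / 2, 0, 1 / 2) := by
  have hhalf : b / (0 + 2 * b + 0) = 1 / 2 := by field_simp; ring
  simp only [wolbNormalize, hhalf, zero_div]

lemma wolbNormalize_zero_mid_right {a : ℝ} (ha : a ≠ 0) :
    wolbNormalize a 0 0 = (1, 0, 0, 0) := by
  simp only [wolbNormalize, mul_zero, add_zero, div_self ha, zero_div]

lemma nWolbOp_one_eq (p : ℝ × ℝ × ℝ × ℝ) :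
    nWolbOp 1 p = wolbNormalize (2 * p.1 + p.2.2.1) p.2.1 p.2.2.1 := by
  have hD : 2 * p.1 + p.2.2.1 + 2 * p.2.1 + p.2.2.1 = 2 * (p.1 + p.2.1 + p.2.2.1) := by ring
  simp only [nWolbOp, wolbNormalize, hD]
  ring_nf

lemma nWolbOp_one_wolbNormalize {a b c : ℝ} (hD : a + 2 * b + c ≠ 0) :
    nWolbOp 1 (wolbNormalize a b c) = wolbNormalize (a + c / 2) (b / 2) (c / 2) := by
  set D := a + 2 * b + c
  calc nWolbOp 1 (wolbNormalize a b c)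
      = wolbNormalize (D⁻¹ * (2 * a + c)) (D⁻¹ * b) (D⁻¹ * c) := by
        rw [nWolbOp_one_eq]; congr 1 <;> simp only [wolbNormalize] <;> ring
    _ = wolbNormalize (2⁻¹ * (2 * a + c)) (2⁻¹ * b) (2⁻¹ * c) := by
        rw [wolbNormalize_mul _ _ _ _ (inv_ne_zero hD),
          wolbNormalize_mul _ _ _ _ (inv_ne_zero two_ne_zero)]
    _ = wolbNormalize (a + c / 2) (b / 2) (c / 2) := by ring_nf

lemma iterate_nWolbOp_one_succ (s : ℝ × ℝ × ℝ × ℝ) (h₁ : 0 ≤ s.1) (h₂ : 0 ≤ s.2.1)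
    (h₃ : 0 ≤ s.2.2.1) (hα : 0 < s.1 + s.2.1 + s.2.2.1) (k : ℕ) :
    (nWolbOp 1)^[k + 1] s =
      wolbNormalize (s.1 + (1 - 2⁻¹ ^ (k + 1)) * s.2.2.1) (2⁻¹ ^ (k + 1) * s.2.1)
        (2⁻¹ ^ (k + 1) * s.2.2.1) := by
  induction k with
  | zero =>
    rw [Function.iterate_one, nWolbOp_one_eq, ← wolbNormalize_mul 2⁻¹ _ _ _ (by norm_num)]
    ring_nf
  | succ k ih =>
    set r : ℝ := 2⁻¹ ^ (k + 1)
    have hr : 0 < r := by positivity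
    have hr₁ : r ≤ 1 := pow_le_one₀ (by norm_num) (by norm_num)
    have hD : s.1 + (1 - r) * s.2.2.1 + 2 * (r * s.2.1) + r * s.2.2.1 ≠ 0 := by
      nlinarith
    rw [Function.iterate_succ_apply', ih, nWolbOp_one_wolbNormalize hD, pow_succ _ (k + 1)]
    congr 1 <;> ring

lemma tendsto_wolbNormalize {ι : Type*} {l : Filter ι} {f g h : ι → ℝ} {a b c : ℝ}
    (hf : Tendsto f l (𝓝 a)) (hg : Tendsto g l (𝓝 b)) (hh : Tendsto h l (𝓝 c))
    (hD : a + 2 * b + c ≠ 0) :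
    Tendsto (fun i => wolbNormalize (f i) (g i) (h i)) l (𝓝 (wolbNormalize a b c)) := by
  have hden := (hf.add (hg.const_mul 2)).add hh
  exact (hf.div hden hD).prodMk_nhds
    ((hg.div hden hD).prodMk_nhds ((hh.div hden hD).prodMk_nhds (hg.div hden hD)))

theorem nWolbOp_one_limit (s : ℝ × ℝ × ℝ × ℝ) (hs : s ∈ S31) (hx2 : 0 < s.2.1) :
    (s.1 = 0 ∧ s.2.2.1 = 0 →
      Filter.Tendsto (fun k => (nWolbOp 1)^[k] s) Filter.atTop
        (nhds ((0 : ℝ), (1 : ℝ) / 2, (0 : ℝ), (1 : ℝ) / 2))) ∧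
    (¬(s.1 = 0 ∧ s.2.2.1 = 0) →
      Filter.Tendsto (fun k => (nWolbOp 1)^[k] s) Filter.atTop
        (nhds ((1 : ℝ), (0 : ℝ), (0 : ℝ), (0 : ℝ)))) := by
  obtain ⟨h₁, h₂, h₃, -, hα, -, -⟩ := hs
  have hclosed := iterate_nWolbOp_one_succ s h₁ h₂ h₃ hα
  refine ⟨fun ⟨hs₁, hs₃⟩ => ?_, fun hne => ?_⟩ <;> rw [← tendsto_add_atTop_iff_nat 1]
  · refine tendsto_const_nhds.congr fun k => ?_
    rw [hclosed, hs₁, hs₃, mul_zero, mul_zero, zero_add,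
      wolbNormalize_zero_left_right (by positivity)]
  · have hr : Tendsto (fun k : ℕ => (2⁻¹ : ℝ) ^ (k + 1)) atTop (𝓝 0) :=
      (tendsto_pow_atTop_nhds_zero_of_lt_one (by norm_num) (by norm_num)).comp
        (tendsto_add_atTop_nat 1)
    have hsum : s.1 + s.2.2.1 ≠ 0 := by
      contrapose! hne
      constructor <;> linarith
    have hlim := tendsto_wolbNormalize
      ((tendsto_const_nhds (x := s.1)).add
        (((tendsto_const_nhds (x := (1 : ℝ))).sub hr).mul_const s.2.2.1))
      (hr.mul_const s.2.1) (hr.mul_const s.2.2.1) (by simpa using hsum)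
    simp only [sub_zero, one_mul, zero_mul, wolbNormalize_zero_mid_right hsum] at hlim
    exact hlim.congr fun k => (hclosed k).symm
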